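/- Fix integers r ≥ 0 and s ≥ 0. The function J ↦ |J|_{s,r}, with values in [0,∞], is lower semicontinuous on 𝒩_k^r: whenever Jᵢ → J in the r-natural norm, liminf_i |Jᵢ|_{s,r} ≥ |J|_{s,r}. In particular (for s = 0) the mass of chainlets is lower semicontinuous in the r-natural topology. -/

import Mathlib

/-
Common setting: an axiomatization of Harrison's chainlet geometry in `ℝⁿ`:
oriented polyhedral `k`-cells, polyhedral `k`-chains, translation, scaling,
boundary, mass, support, the `k`-vector part `Vec`, integration of differential
forms, difference chains and the natural norms.
-/

noncomputable section

open scoped BigOperators RealInnerProductSpace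
open Filter

/-- Euclidean space `ℝⁿ`. -/
abbrev Euc (n : ℕ) : Type := EuclideanSpace ℝ (Fin n)

/-- Alternating `k`-linear forms on `ℝⁿ`: the values of a differential `k`-form. -/
abbrev Form (n k : ℕ) : Type := (Euc n) [⋀^Fin k]→ₗ[ℝ] ℝ

/-- The mass `√det(⟨vᵢ,vⱼ⟩)` of the simple `k`-vector spanned by the family `v`. -/
def simpleMass {n k : ℕ} (v : Fin k → Euc n) : ℝ :=
  Real.sqrt (Matrix.det (Matrix.of fun i j => ⟪v i, v j⟫))

/-- The mass of a `k`-vector in `ℝⁿ` (an element of the `k`-th exterior power,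
viewed inside the exterior algebra): the infimum of `Σᵢ M(αᵢ)` over all
representations as a finite sum of simple `k`-vectors. -/
def vecMass {n : ℕ} (k : ℕ) (α : ExteriorAlgebra ℝ (Euc n)) : ℝ :=
  sInf {x | ∃ (m : ℕ) (v : Fin m → Fin k → Euc n),
    α = (∑ i, ExteriorAlgebra.ιMulti ℝ k (v i)) ∧ x = ∑ i, simpleMass (v i)}

/-- An axiomatization of oriented polyhedral cells and polyhedral chains in `ℝⁿ`,
with the operators of chainlet geometry. `P k` is the space of polyhedral
`k`-chains. -/
structure PolyhedralSystem (n : ℕ) (P : ℕ → Type)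
    [∀ k, AddCommGroup (P k)] [∀ k, Module ℝ (P k)] : Type 1 where
  /-- The type of oriented `k`-cells in `ℝⁿ`. -/
  Cell : ℕ → Type
  /-- The underlying (compact convex) set of a cell. -/
  cellSet : ∀ {k}, Cell k → Set (Euc n)
  cellSet_compact : ∀ {k} (σ : Cell k), IsCompact (cellSet σ)
  cellSet_convex : ∀ {k} (σ : Cell k), Convex ℝ (cellSet σ)
  /-- The relative interior of a cell. -/
  cellInt : ∀ {k}, Cell k → Set (Euc n)
  cellInt_subset : ∀ {k} (σ : Cell k), cellInt σ ⊆ cellSet σ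
  cellInt_nonempty : ∀ {k} (σ : Cell k), (cellInt σ).Nonempty
  /-- The `k`-dimensional volume of a `k`-cell. -/
  cellMass : ∀ {k}, Cell k → ℝ
  cellMass_pos : ∀ {k} (σ : Cell k), 0 < cellMass σ
  /-- An oriented spanning frame recording the oriented `k`-direction and the size
  of a `k`-cell. -/
  cellVec : ∀ {k}, Cell k → Fin k → Euc n
  simpleMass_cellVec : ∀ {k} (σ : Cell k), simpleMass (cellVec σ) = cellMass σ
  /-- The polyhedral chain determined by an oriented cell. -/
  chain : ∀ {k}, Cell k → P k
  /-- Every polyhedral chain is a finite linear combination of oriented cells. -/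
  chain_spans : ∀ {k} (Q : P k),
    ∃ (m : ℕ) (a : Fin m → ℝ) (σ : Fin m → Cell k), Q = ∑ i, a i • chain (σ i)
  /-- Translation of cells. -/
  translCell : ∀ {k}, Euc n → Cell k → Cell k
  cellSet_translCell : ∀ {k} (v : Euc n) (σ : Cell k),
    cellSet (translCell v σ) = (fun x => v + x) '' cellSet σ
  cellMass_translCell : ∀ {k} (v : Euc n) (σ : Cell k),
    cellMass (translCell v σ) = cellMass σ
  /-- Translation of polyhedral chains. -/
  transl : ∀ {k}, Euc n → P k →ₗ[ℝ] P k
  transl_chain : ∀ {k} (v : Euc n) (σ : Cell k),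
    transl v (chain σ) = chain (translCell v σ)
  transl_zero : ∀ {k} (Q : P k), transl 0 Q = Q
  transl_add : ∀ {k} (u v : Euc n) (Q : P k), transl (u + v) Q = transl u (transl v Q)
  /-- Scaling (homothety `x ↦ c • x`, `c > 0`) of cells. -/
  scaleCell : ∀ {k}, ℝ → Cell k → Cell k
  cellSet_scaleCell : ∀ {k} (c : ℝ), 0 < c → ∀ σ : Cell k,
    cellSet (scaleCell c σ) = (fun x => c • x) '' cellSet σ
  /-- Pushforward of polyhedral chains under the homothety `x ↦ c • x`. -/
  scale : ∀ {k}, ℝ → P k →ₗ[ℝ] P k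
  scale_chain : ∀ {k} (c : ℝ) (σ : Cell k), scale c (chain σ) = chain (scaleCell c σ)
  /-- The oriented `k`-parallelepiped spanned by a linearly independent family. -/
  pp : ∀ {k} (v : Fin k → Euc n), LinearIndependent ℝ v → Cell k
  cellSet_pp : ∀ {k} (v : Fin k → Euc n) (hv : LinearIndependent ℝ v),
    cellSet (pp v hv) =
      {x | ∃ t : Fin k → ℝ, (∀ i, t i ∈ Set.Icc (0 : ℝ) 1) ∧ x = ∑ i, t i • v i}
  cellVec_pp : ∀ {k} (v : Fin k → Euc n) (hv : LinearIndependent ℝ v),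
    cellVec (pp v hv) = v
  /-- The facets of a `(k+1)`-cell, carrying their induced orientations. -/
  facets : ∀ {k}, Cell (k + 1) → Finset (Cell k)
  /-- The boundary operator on polyhedral chains (zero on `0`-chains). -/
  bdry : ∀ {k}, P (k + 1) →ₗ[ℝ] P k
  /-- The boundary of a cell is the sum of its facets with induced orientations. -/
  bdry_chain : ∀ {k} (σ : Cell (k + 1)), bdry (chain σ) = ∑ τ ∈ facets σ, chain τ
  /-- The mass of a polyhedral chain. -/
  mass : ∀ {k}, P k → ℝ
  mass_eq : ∀ {k} (Q : P k), mass Q =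
    sInf {x : ℝ | ∃ (m : ℕ) (a : Fin m → ℝ) (σ : Fin m → Cell k),
      Q = (∑ i, a i • chain (σ i)) ∧ x = ∑ i, |a i| * cellMass (σ i)}
  /-- The support of a polyhedral chain. -/
  supp : ∀ {k}, P k → Set (Euc n)
  /-- The support of a non-overlapping chain is the union of the supports of its cells. -/
  supp_eq : ∀ {k} (m : ℕ) (a : Fin m → ℝ) (σ : Fin m → Cell k),
    (Pairwise fun i j => Disjoint (cellInt (σ i)) (cellInt (σ j))) → (∀ i, a i ≠ 0) →
    supp (∑ i, a i • chain (σ i)) = ⋃ i, cellSet (σ i)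
  /-- The `k`-vector part `Vec` of a polyhedral `k`-chain. -/
  vec : ∀ {k}, P k →ₗ[ℝ] ExteriorAlgebra ℝ (Euc n)
  vec_mem : ∀ {k} (Q : P k), vec Q ∈ ⋀[ℝ]^k (Euc n)
  vec_chain : ∀ {k} (σ : Cell k),
    vec (chain σ) = ExteriorAlgebra.ιMulti ℝ k (cellVec σ)
  /-- The integral of a differential `k`-form over a polyhedral `k`-chain. -/
  integral : ∀ {k}, P k → (Euc n → Form n k) → ℝ
  integral_add : ∀ {k} (Q R : P k) (ω : Euc n → Form n k),
    integral (Q + R) ω = integral Q ω + integral R ω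
  integral_smul : ∀ {k} (c : ℝ) (Q : P k) (ω : Euc n → Form n k),
    integral (c • Q) ω = c * integral Q ω
  integral_form_add : ∀ {k} (Q : P k) (ω η : Euc n → Form n k),
    integral Q (ω + η) = integral Q ω + integral Q η
  integral_form_smul : ∀ {k} (c : ℝ) (Q : P k) (ω : Euc n → Form n k),
    integral Q (c • ω) = c * integral Q ω
  /-- The exterior derivative of a differential form. -/
  extDeriv : ∀ {k}, (Euc n → Form n k) → (Euc n → Form n (k + 1))
  /-- Characterization of the exterior derivative at points of differentiability. -/
  extDeriv_apply : ∀ {k} (ω : Euc n → Form n k) (x : Euc n),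
    (∀ w : Fin k → Euc n, DifferentiableAt ℝ (fun y => ω y w) x) →
    ∀ v : Fin (k + 1) → Euc n,
      extDeriv ω x v =
        ∑ i : Fin (k + 1), (-1 : ℝ) ^ (i : ℕ) *
          fderiv ℝ (fun y => ω y (v ∘ i.succAbove)) x (v i)

namespace PolyhedralSystem

variable {n : ℕ} {P : ℕ → Type} [∀ k, AddCommGroup (P k)] [∀ k, Module ℝ (P k)]
variable (S : PolyhedralSystem n P)

/-- The difference chain `Δ_u Q = T_u Q - Q`. -/
def delta {k : ℕ} (u : Euc n) (Q : P k) : P k := S.transl u Q - Q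

/-- The iterated difference chain `Δ_{U} Q`. -/
def deltaList {k : ℕ} : List (Euc n) → P k → P k
  | [], Q => Q
  | u :: U, Q => S.delta u (deltaList U Q)

/-- `x` is the weight of an admissible representation of `D` as a chain of
`j`-difference `k`-cells, i.e. `D = Σᵢ aᵢ Δ_{Uᵢ} σᵢ` with each `Uᵢ` a list of `j`
vectors and `x = Σᵢ |aᵢ| M(σᵢ)|u₁|⋯|u_j|`. -/
def IsDiffRep {k : ℕ} (j : ℕ) (D : P k) (x : ℝ) : Prop :=
  ∃ (m : ℕ) (a : Fin m → ℝ) (σ : Fin m → S.Cell k) (U : Fin m → List (Euc n)),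
    (∀ i, (U i).length = j) ∧
    D = (∑ i, a i • S.deltaList (U i) (S.chain (σ i))) ∧
    x = ∑ i, |a i| * (S.cellMass (σ i) * ((U i).map norm).prod)

/-- The `j`-difference norm `‖D‖_j` of a `j`-difference `k`-chain. -/
def diffNorm {k : ℕ} (j : ℕ) (D : P k) : ℝ := sInf {x | S.IsDiffRep j D x}

/-- The `r`-natural (semi)norm `|Q|^{♮r}` on polyhedral `k`-chains, defined
recursively: `|Q|^{♮0} = M(Q)`, and `|Q|^{♮r}` is the infimum of
`Σ_{j≤r} ‖Dʲ‖_j + |B|^{♮(r-1)}` over all decompositions `Q = Σ_{j≤r} Dʲ + ∂B`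
(the boundary term being omitted in top dimension `k = n`). -/
def natNorm : ℕ → (k : ℕ) → P k → ℝ
  | 0, _, Q => S.mass Q
  | r + 1, k, Q =>
    if k < n then
      sInf {x | ∃ (D : Fin (r + 2) → P k) (y : Fin (r + 2) → ℝ) (B : P (k + 1)),
        Q = (∑ j, D j) + S.bdry B ∧
        (∀ j : Fin (r + 2), S.IsDiffRep (j : ℕ) (D j) (y j)) ∧
        x = (∑ j, y j) + natNorm r (k + 1) B}
    else
      sInf {x | ∃ (D : Fin (r + 2) → P k) (y : Fin (r + 2) → ℝ),
        Q = (∑ j, D j) ∧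
        (∀ j : Fin (r + 2), S.IsDiffRep (j : ℕ) (D j) (y j)) ∧
        x = ∑ j, y j}

/-- The set of difference quotients `|∫_{Δ_U σ} ω| / ‖Δ_U σ‖_j` over `j`-difference
`k`-cells all of whose translates lie in the region `W`; its supremum is `‖ω‖_j`. -/
def diffQuotSet {k : ℕ} (j : ℕ) (W : Set (Euc n)) (ω : Euc n → Form n k) : Set ℝ :=
  {x | ∃ (σ : S.Cell k) (U : List (Euc n)), U.length = j ∧
    (∀ l : List (Euc n), l.Sublist U → ∀ p ∈ S.cellSet σ, l.sum + p ∈ W) ∧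
    x = |S.integral (S.deltaList U (S.chain σ)) ω| /
      (S.cellMass σ * ((U.map norm).prod))}

/-- The seminorm `‖ω‖_j` of a differential form over the region `W`. -/
def formNormJ {k : ℕ} (j : ℕ) (W : Set (Euc n)) (ω : Euc n → Form n k) : ℝ :=
  sSup (S.diffQuotSet j W ω)

/-- The `r`-natural norm `|ω|^{♮r} = max{‖ω‖_0,…,‖ω‖_r,‖dω‖_0,…,‖dω‖_{r-1}}`
of a differential form over the region `W`. -/
def formNatNorm {k : ℕ} (r : ℕ) (W : Set (Euc n)) (ω : Euc n → Form n k) : ℝ :=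
  max (⨆ j : Fin (r + 1), S.formNormJ j W ω)
    (⨆ j : Fin r, S.formNormJ j W (S.extDeriv ω))

/-- `ω` is a differential `k`-form of class `B^r` on the region `W`: it is
(continuously) differentiable there and `|ω|^{♮r} < ∞`. -/
def IsClassB {k : ℕ} (r : ℕ) (W : Set (Euc n)) (ω : Euc n → Form n k) : Prop :=
  (∀ w : Fin k → Euc n, ContinuousOn (fun x => ω x w) W) ∧
  (∀ w : Fin k → Euc n, DifferentiableOn ℝ (fun x => ω x w) W) ∧
  (∀ j : Fin (r + 1), BddAbove (S.diffQuotSet j W ω)) ∧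
  (∀ j : Fin r, BddAbove (S.diffQuotSet j W (S.extDeriv ω)))

end PolyhedralSystem

/-- An axiomatization of the Banach spaces `𝒩ᵣᵏ = N r k` of `k`-chainlets of class
`Nʳ`: the completions of the spaces of polyhedral `k`-chains in the `r`-natural
norms, together with the continuous extensions of translation, boundary and
integration, and the natural inclusions `𝒩ʳ ↪ 𝒩ʳ⁺¹`. -/
structure ChainletSystem (n : ℕ) (P : ℕ → Type)
    [∀ k, AddCommGroup (P k)] [∀ k, Module ℝ (P k)]
    (N : ℕ → ℕ → Type) [∀ r k, NormedAddCommGroup (N r k)]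
    [∀ r k, NormedSpace ℝ (N r k)] [∀ r k, CompleteSpace (N r k)]
    extends PolyhedralSystem n P : Type 1 where
  /-- The inclusion of polyhedral `k`-chains into `k`-chainlets of class `Nʳ`. -/
  incl : ∀ r k, P k →ₗ[ℝ] N r k
  /-- The inclusion is isometric for the `r`-natural norm. -/
  norm_incl : ∀ (r k : ℕ) (Q : P k),
    ‖incl r k Q‖ = toPolyhedralSystem.natNorm r k Q
  /-- Polyhedral chains are dense in the space of chainlets. -/
  dense_incl : ∀ r k, DenseRange (incl r k)
  /-- Translation of chainlets. -/
  translN : ∀ r k, Euc n → N r k →ₗ[ℝ] N r k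
  translN_incl : ∀ (r k : ℕ) (v : Euc n) (Q : P k),
    translN r k v (incl r k Q) = incl r k (toPolyhedralSystem.transl v Q)
  norm_translN : ∀ (r k : ℕ) (v : Euc n) (J : N r k), ‖translN r k v J‖ = ‖J‖
  /-- The boundary operator `∂ : 𝒩ᵣ(k+1) → 𝒩ᵣ₊₁ᵏ` on chainlets. -/
  bdryN : ∀ r k, N r (k + 1) →ₗ[ℝ] N (r + 1) k
  bdryN_incl : ∀ (r k : ℕ) (Q : P (k + 1)),
    bdryN r k (incl r (k + 1) Q) = incl (r + 1) k (toPolyhedralSystem.bdry Q)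
  norm_bdryN : ∀ (r k : ℕ) (J : N r (k + 1)), ‖bdryN r k J‖ ≤ ‖J‖
  /-- The natural inclusion `𝒩ᵣᵏ → 𝒩ᵣ₊₁ᵏ` (the natural norms are decreasing). -/
  up : ∀ r k, N r k →ₗ[ℝ] N (r + 1) k
  up_incl : ∀ (r k : ℕ) (Q : P k), up r k (incl r k Q) = incl (r + 1) k Q
  norm_up : ∀ (r k : ℕ) (J : N r k), ‖up r k J‖ ≤ ‖J‖
  /-- The integral `∫_J ω` of a differential `k`-form over a `k`-chainlet of
  class `Nʳ`, extending the integral over polyhedral chains by continuity. -/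
  integralN : ∀ r k, N r k → (Euc n → Form n k) → ℝ
  integralN_incl : ∀ (r k : ℕ) (Q : P k) (ω : Euc n → Form n k),
    integralN r k (incl r k Q) ω = toPolyhedralSystem.integral Q ω
  integralN_cont : ∀ (r k : ℕ) (ω : Euc n → Form n k),
    toPolyhedralSystem.IsClassB r Set.univ ω →
    Continuous fun J : N r k => integralN r k J ω

namespace ChainletSystem

variable {n : ℕ} {P : ℕ → Type} [∀ k, AddCommGroup (P k)] [∀ k, Module ℝ (P k)]
  {N : ℕ → ℕ → Type} [∀ r k, NormedAddCommGroup (N r k)]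
  [∀ r k, NormedSpace ℝ (N r k)] [∀ r k, CompleteSpace (N r k)]
variable (C : ChainletSystem n P N)

/-- The difference chainlet `Δ_u J = T_u J - J`. -/
def deltaN {r k : ℕ} (u : Euc n) (J : N r k) : N r k := C.translN r k u J - J

/-- The iterated difference chainlet `Δ_U J`. -/
def deltaNList {r k : ℕ} : List (Euc n) → N r k → N r k
  | [], J => J
  | u :: U, J => C.deltaN u (deltaNList U J)

/-- The iterated natural inclusion `𝒩ᵣᵏ → 𝒩ᵣ₊ⱼᵏ`. -/
def upIter {r k : ℕ} : (j : ℕ) → N r k → N (r + j) k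
  | 0, J => J
  | j + 1, J => C.up (r + j) k (upIter j J)

end ChainletSystem

/-- The quantity `|J|_{s,r} ∈ [0,∞]`: the infimum of `liminfᵢ |Pᵢ|^{♮s}` over all
sequences of polyhedral chains `Pᵢ → J` in the `r`-natural norm. -/
def lsNorm {n : ℕ} {P : ℕ → Type}
    [∀ k, AddCommGroup (P k)] [∀ k, Module ℝ (P k)]
    {N : ℕ → ℕ → Type} [∀ r k, NormedAddCommGroup (N r k)]
    [∀ r k, NormedSpace ℝ (N r k)] [∀ r k, CompleteSpace (N r k)]
    (C : ChainletSystem n P N) (s r k : ℕ) (J : N r k) : ENNReal :=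
  sInf {L | ∃ Q : ℕ → P k,
    Filter.Tendsto (fun i => C.incl r k (Q i)) Filter.atTop (nhds J) ∧
    L = Filter.liminf
      (fun i => ENNReal.ofReal (C.toPolyhedralSystem.natNorm s k (Q i)))
      Filter.atTop}

/-! `|J|_{s,r}` is the sequential relaxation of `|·|^{♮s}` along the inclusion
`𝒫_k → 𝒩_k^r`. Such a relaxation is lower semicontinuous in any Fréchet–Urysohn space: its
strict sublevel set `{F < c}` lies in the closure of the image of `{f < c}`, and conversely
every point of that closure is a limit of a sequence from the image, whence `F ≤ c` there. -/

section SeqRelaxation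

variable {β X : Type*} [TopologicalSpace X] (e : β → X) (f : β → ENNReal)

def seqRelaxation (x : X) : ENNReal :=
  sInf {L | ∃ Q : ℕ → β, Tendsto (fun i => e (Q i)) atTop (nhds x) ∧
    L = liminf (fun i => f (Q i)) atTop}

theorem mem_closure_image_of_seqRelaxation_lt {x : X} {c : ENNReal}
    (h : seqRelaxation e f x < c) : x ∈ closure (e '' {b | f b < c}) := by
  obtain ⟨_, ⟨Q, hQ, rfl⟩, hlt⟩ := sInf_lt_iff.mp h
  have hfreq : ∃ᶠ i in atTop, f (Q i) < c :=
    frequently_lt_of_liminf_lt (by isBoundedDefault) hlt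
  exact mem_closure_of_frequently_of_tendsto (hfreq.mono fun i hi => Set.mem_image_of_mem e hi) hQ

theorem seqRelaxation_le_of_mem_closure_image [FrechetUrysohnSpace X] {x : X} {c : ENNReal}
    (hx : x ∈ closure (e '' {b | f b < c})) : seqRelaxation e f x ≤ c := by
  obtain ⟨y, hy, hyx⟩ := mem_closure_iff_seq_limit.mp hx
  choose Q hQc hQy using hy
  have hQx : Tendsto (fun i => e (Q i)) atTop (nhds x) := by simpa only [hQy] using hyx
  calc seqRelaxation e f x ≤ liminf (fun i => f (Q i)) atTop := sInf_le ⟨Q, hQx, rfl⟩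
    _ ≤ c := liminf_le_of_frequently_le' (Frequently.of_forall fun i => (hQc i).le)

theorem lowerSemicontinuous_seqRelaxation [FrechetUrysohnSpace X] :
    LowerSemicontinuous (seqRelaxation e f) := by
  refine lowerSemicontinuous_iff_isClosed_preimage.mpr fun c =>
    isClosed_of_closure_subset fun x hx => ?_
  refine le_of_forall_gt_imp_ge_of_dense fun c' hc' => seqRelaxation_le_of_mem_closure_image e f ?_
  have hsub : seqRelaxation e f ⁻¹' Set.Iic c ⊆ closure (e '' {b | f b < c'}) := fun y hy =>
    mem_closure_image_of_seqRelaxation_lt e f (lt_of_le_of_lt hy hc')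
  simpa only [closure_closure] using closure_mono hsub hx

end SeqRelaxation

/-- The function `J ↦ |J|_{s,r}` is lower semicontinuous on
`𝒩_k^r`: whenever `Jᵢ → J` in the `r`-natural norm,
`liminfᵢ |Jᵢ|_{s,r} ≥ |J|_{s,r}`. In particular (`s = 0`) the mass of chainlets is
lower semicontinuous in the `r`-natural topology. -/
theorem lsNorm_lower_semicontinuous (n : ℕ) (P : ℕ → Type)
    [∀ k, AddCommGroup (P k)] [∀ k, Module ℝ (P k)]
    (N : ℕ → ℕ → Type) [∀ r k, NormedAddCommGroup (N r k)]
    [∀ r k, NormedSpace ℝ (N r k)] [∀ r k, CompleteSpace (N r k)]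
    (C : ChainletSystem n P N)
    (s r k : ℕ) (J : N r k) (Ji : ℕ → N r k)
    (hJi : Filter.Tendsto Ji Filter.atTop (nhds J)) :
    lsNorm C s r k J ≤ Filter.liminf (fun i => lsNorm C s r k (Ji i)) Filter.atTop := by
  have hlsc := lowerSemicontinuous_seqRelaxation (C.incl r k)
    fun Q => ENNReal.ofReal (C.toPolyhedralSystem.natNorm s k Q)
  exact (hlsc.le_liminf J).trans hJi.liminf_le_liminf_comp
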